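/- For every A ⊆ ℕ, the set R(A) is Turing equivalent to A, and R(A) is generically computable if and only if A is computable. -/

import Mathlib

open Filter

open scoped Classical in
/-- `ρ_n(A) = |A ∩ {0,…,n}| / (n+1)`. -/
noncomputable def partialDensity (A : Set ℕ) (n : ℕ) : ℝ :=
  ((Finset.range (n + 1)).filter (· ∈ A)).card / (n + 1)

/-- The upper density of `A`: `limsup_n ρ_n(A)`. -/
noncomputable def upperDensity (A : Set ℕ) : ℝ :=
  Filter.limsup (partialDensity A) Filter.atTop

/-- `A` has asymptotic density `r`: `ρ_n(A) → r`. -/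
def HasDensity (A : Set ℕ) (r : ℝ) : Prop :=
  Filter.Tendsto (partialDensity A) Filter.atTop (nhds r)

open scoped Classical in
/-- The characteristic function of `A` (with values in `{0,1} ⊆ ℕ`). -/
noncomputable def charFun (A : Set ℕ) : ℕ → ℕ := fun n => if n ∈ A then 1 else 0

/-- `Φ` is a generic description of `A`: `Φ(x) = χ_A(x)` whenever `Φ(x)` is defined,
and the domain of `Φ` has density 1. -/
def IsGenericDescription (Φ : ℕ →. ℕ) (A : Set ℕ) : Prop :=
  (∀ x m, m ∈ Φ x → m = charFun A x) ∧ HasDensity {x | (Φ x).Dom} 1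

/-- `A` is generically computable: some partial computable function is a generic
description of `A`. -/
def GenericallyComputable (A : Set ℕ) : Prop :=
  ∃ Φ : ℕ →. ℕ, Partrec Φ ∧ IsGenericDescription Φ A

/-- `A` is computably enumerable: `A` is the domain of a partial computable function. -/
def CE (A : Set ℕ) : Prop :=
  ∃ f : ℕ →. ℕ, Partrec f ∧ A = {x | (f x).Dom}

/-- `A` is a computable set. -/
def ComputableSet (A : Set ℕ) : Prop := ComputablePred (· ∈ A)

/-- `A` is immune: infinite, with no infinite c.e. subset. -/
def Immune (A : Set ℕ) : Prop :=
  A.Infinite ∧ ∀ W : Set ℕ, CE W → W.Infinite → ¬W ⊆ A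

/-- `A` is bi-immune: both `A` and its complement are immune. -/
def BiImmune (A : Set ℕ) : Prop := Immune A ∧ Immune Aᶜ

/-- `A` and `B` are generically similar: their symmetric difference has density 0. -/
def GenericallySimilar (A B : Set ℕ) : Prop := HasDensity (symmDiff A B) 0

/-- `A` is coarsely computable: generically similar to a computable set. -/
def CoarselyComputable (A : Set ℕ) : Prop :=
  ∃ C : Set ℕ, ComputableSet C ∧ GenericallySimilar A C

/-- `R_k = {m : 2^k ∣ m, 2^(k+1) ∤ m}`. -/
def Rset (k : ℕ) : Set ℕ := {m | 2 ^ k ∣ m ∧ ¬2 ^ (k + 1) ∣ m}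

/-- `R(A) = ⋃_{n ∈ A} R_n`. -/
def RofSet (A : Set ℕ) : Set ℕ := ⋃ n ∈ A, Rset n

/-- Partial functions `ℕ →. ℕ` computable relative to a (total) oracle `O : ℕ → ℕ`. -/
inductive RecursiveInOracle (O : ℕ → ℕ) : (ℕ →. ℕ) → Prop
  | zero : RecursiveInOracle O (pure 0)
  | succ : RecursiveInOracle O fun n => Part.some (n + 1)
  | left : RecursiveInOracle O fun n => Part.some (Nat.unpair n).1
  | right : RecursiveInOracle O fun n => Part.some (Nat.unpair n).2
  | oracle : RecursiveInOracle O fun n => Part.some (O n)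
  | pair {f g : ℕ →. ℕ} : RecursiveInOracle O f → RecursiveInOracle O g →
      RecursiveInOracle O fun n => Nat.pair <$> f n <*> g n
  | comp {f g : ℕ →. ℕ} : RecursiveInOracle O f → RecursiveInOracle O g →
      RecursiveInOracle O fun n => g n >>= f
  | prec {f g : ℕ →. ℕ} : RecursiveInOracle O f → RecursiveInOracle O g →
      RecursiveInOracle O (Nat.unpaired fun a n =>
        n.rec (f a) fun y IH => do let i ← IH; g (Nat.pair a (Nat.pair y i)))
  | rfind {f : ℕ →. ℕ} : RecursiveInOracle O f →
      RecursiveInOracle O fun a => Nat.rfind fun n => (fun m => m = 0) <$> f (Nat.pair a n)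

/-- `A ≤_T B`: the characteristic function of `A` is computable relative to `B`. -/
def SetTuringReducible (A B : Set ℕ) : Prop :=
  RecursiveInOracle (charFun B) fun n => Part.some (charFun A n)

/-- `A ≡_T B`. -/
def SetTuringEquivalent (A B : Set ℕ) : Prop :=
  SetTuringReducible A B ∧ SetTuringReducible B A

/-! The 2-adic valuation `v` reads off the block of an element: `m ∈ R(A)` iff `m ≠ 0` and
`v(m) ∈ A`, while `2^n ∈ R(A)` iff `n ∈ A`. Each direction of `R(A) ≡_T A` is therefore a
single oracle query through a computable map. Each `R_k` takes up a proportion `2^{-(k+1)}` of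
every initial segment of length `2^{k+1} t`, so the domain of a generic description of `R(A)`,
having density 1, meets every `R_k`; searching that domain for a convergent computation at
some element of `R_k` then decides whether `k ∈ A`. -/

theorem Primrec.nat_pow : Primrec₂ ((· ^ ·) : ℕ → ℕ → ℕ) :=
  Primrec₂.unpaired'.1 Nat.Primrec.pow

theorem Primrec.nat_dvd : PrimrecRel ((· ∣ ·) : ℕ → ℕ → Prop) :=
  (Primrec.eq.comp (Primrec.nat_mod.comp Primrec.snd Primrec.fst) (Primrec.const 0)).of_eq
    fun _ => Nat.dvd_iff_mod_eq_zero.symm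

theorem computable_padicValNat {p : ℕ} (hp : p ≠ 1) : Computable (padicValNat p) := by
  have hstop : PrimrecRel fun a n : ℕ => a = 0 ∨ ¬p ^ (n + 1) ∣ a :=
    (Primrec.eq.comp Primrec.fst (Primrec.const 0)).or
      (Primrec.nat_dvd.comp (Primrec.nat_pow.comp (Primrec.const p)
        (Primrec.succ.comp Primrec.snd)) Primrec.fst).not
  refine (Partrec.rfind (p := fun a n => Part.some (decide (a = 0 ∨ ¬p ^ (n + 1) ∣ a)))
    hstop.decide.to_comp.partrec₂).of_eq_tot fun a => Nat.mem_rfind.2 ⟨?_, ?_⟩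
  · rcases eq_or_ne a 0 with rfl | ha
    · simp
    · simp [ha, padicValNat_dvd_iff_le_of_ne_one hp ha]
  · intro n hn
    have ha : a ≠ 0 := by rintro rfl; simp at hn
    simpa [ha, padicValNat_dvd_iff_le_of_ne_one hp ha] using hn

open Nat.Partrec Code in
theorem Partrec.exists_search {Φ : ℕ →. ℕ} (hΦ : Partrec Φ) {p : ℕ → ℕ → Bool}
    (hp : Computable₂ p) :
    ∃ ψ : ℕ →. ℕ, Partrec ψ ∧ (∀ k v, v ∈ ψ k → ∃ m, p k m ∧ v ∈ Φ m) ∧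
      ∀ k m, p k m → (Φ m).Dom → (ψ k).Dom := by
  obtain ⟨c, rfl⟩ := exists_code.1 (Partrec.nat_iff.1 hΦ)
  let F : ℕ → ℕ → Option ℕ := fun k n =>
    bif p k n.unpair.1 then evaln n.unpair.2 c n.unpair.1 else Option.none
  have hF : Computable₂ F := by
    have hm : Computable fun q : ℕ × ℕ => q.2.unpair.1 :=
      Computable.fst.comp (Computable.unpair.comp Computable.snd)
    have hs : Computable fun q : ℕ × ℕ => q.2.unpair.2 :=
      Computable.snd.comp (Computable.unpair.comp Computable.snd)
    exact (Computable.cond (hp.comp Computable.fst hm)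
      (primrec_evaln.to_comp.comp ((hs.pair (Computable.const c)).pair hm))
      (Computable.const Option.none)).to₂
  refine ⟨fun k => Nat.rfindOpt (F k), Partrec.rfindOpt hF, fun k v hv => ?_,
    fun k m hpm hm => ?_⟩
  · obtain ⟨n, hn⟩ := Nat.rfindOpt_spec hv
    cases hpk : p k n.unpair.1
    · simp [F, hpk] at hn
    · simp only [F, hpk, cond_true] at hn
      exact ⟨_, hpk, evaln_sound hn⟩
  · obtain ⟨s, hs⟩ := evaln_complete.1 (Part.get_mem hm)
    exact Nat.rfindOpt_dom.2 ⟨Nat.pair m s, _, by simpa [F, hpm] using hs⟩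

theorem RecursiveInOracle.of_natPartrec {O : ℕ → ℕ} {f : ℕ →. ℕ} (h : Nat.Partrec f) :
    RecursiveInOracle O f := by
  induction h with
  | zero => exact .zero
  | succ => exact .succ
  | left => exact .left
  | right => exact .right
  | pair _ _ ihf ihg => exact .pair ihf ihg
  | comp _ _ ihf ihg => exact .comp ihf ihg
  | prec _ _ ihf ihg => exact .prec ihf ihg
  | rfind _ ihf => exact .rfind ihf

theorem RecursiveInOracle.of_computable {O : ℕ → ℕ} {f : ℕ → ℕ} (h : Computable f) :
    RecursiveInOracle O fun n => Part.some (f n) :=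
  of_natPartrec (Partrec.nat_iff.1 h)

theorem RecursiveInOracle.query {O g : ℕ → ℕ} {u : ℕ → ℕ → ℕ} (hg : Computable g)
    (hu : Computable₂ u) : RecursiveInOracle O fun n => Part.some (u n (O (g n))) := by
  have hquery : RecursiveInOracle O fun n => Part.some (O (g n)) := by
    simpa using comp oracle (of_computable hg)
  have hpair : RecursiveInOracle O fun n => Part.some (Nat.pair n (O (g n))) := by
    simpa [Seq.seq] using pair (of_computable Computable.id) hquery
  have hu' : Computable fun n : ℕ => u n.unpair.1 n.unpair.2 :=
    hu.comp (Computable.fst.comp Computable.unpair) (Computable.snd.comp Computable.unpair)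
  simpa using comp (of_computable hu') hpair

theorem SetTuringReducible.of_computable {A B : Set ℕ} {g : ℕ → ℕ} {u : ℕ → ℕ → ℕ}
    (hg : Computable g) (hu : Computable₂ u) (h : ∀ n, charFun A n = u n (charFun B (g n))) :
    SetTuringReducible A B := by
  simpa only [SetTuringReducible, h] using RecursiveInOracle.query hg hu

theorem computableSet_iff_computable_charFun {A : Set ℕ} :
    ComputableSet A ↔ Computable (charFun A) := by
  classical
  constructor
  · rintro ⟨_, hA⟩
    refine (Computable.cond hA (Computable.const 1) (Computable.const 0)).of_eq fun n => ?_
    by_cases hn : n ∈ A <;> simp [charFun, hn]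
  · intro hA
    refine ComputablePred.computable_iff.2
      ⟨fun n => charFun A n == 1, (Primrec.beq.to_comp.comp hA (Computable.const 1)), ?_⟩
    ext n
    by_cases hn : n ∈ A <;> simp [charFun, hn]

theorem mem_rset_iff {k m : ℕ} : m ∈ Rset k ↔ m ≠ 0 ∧ padicValNat 2 m = k := by
  rcases eq_or_ne m 0 with rfl | hm
  · simp [Rset]
  · change 2 ^ k ∣ m ∧ ¬2 ^ (k + 1) ∣ m ↔ _
    rw [padicValNat_dvd_iff_le hm, padicValNat_dvd_iff_le hm]
    omega

theorem two_pow_mul_odd_mem_rset (k j : ℕ) : 2 ^ k * (2 * j + 1) ∈ Rset k := by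
  refine mem_rset_iff.2 ⟨by positivity, ?_⟩
  rw [padicValNat.mul (by positivity) (by omega), padicValNat.prime_pow,
    padicValNat.eq_zero_of_not_dvd (by omega), add_zero]

theorem mem_rofSet_iff {A : Set ℕ} {m : ℕ} :
    m ∈ RofSet A ↔ m ≠ 0 ∧ padicValNat 2 m ∈ A := by
  simp [RofSet, mem_rset_iff]

theorem charFun_rofSet (A : Set ℕ) (m : ℕ) :
    charFun (RofSet A) m = if m = 0 then 0 else charFun A (padicValNat 2 m) := by
  unfold charFun
  split_ifs <;> simp_all [mem_rofSet_iff]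

theorem charFun_rofSet_two_pow (A : Set ℕ) (n : ℕ) :
    charFun (RofSet A) (2 ^ n) = charFun A n := by
  simp [charFun_rofSet]

theorem computable_charFun_rofSet {A : Set ℕ} (hA : Computable (charFun A)) :
    Computable (charFun (RofSet A)) := by
  refine (Computable.cond (Primrec.beq.to_comp.comp Computable.id (Computable.const 0))
    (Computable.const 0) (hA.comp (computable_padicValNat (p := 2) (by norm_num)))).of_eq
    fun m => ?_
  rcases eq_or_ne m 0 with rfl | hm
  · simp [charFun_rofSet]
  · simp [charFun_rofSet, hm, beq_false_of_ne hm]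

theorem setTuringEquivalent_rofSet (A : Set ℕ) : SetTuringEquivalent (RofSet A) A := by
  refine ⟨.of_computable (computable_padicValNat (by norm_num)) ?_ (charFun_rofSet A),
    .of_computable (Primrec.nat_pow.comp (Primrec.const 2) Primrec.id).to_comp
      Computable.snd.to₂ fun n => (charFun_rofSet_two_pow A n).symm⟩
  exact (Primrec.ite (Primrec.eq.comp Primrec.fst (Primrec.const 0)) (Primrec.const 0)
    Primrec.snd).to_comp.to₂

open scoped Classical in
theorem card_filter_range_mem_rset (k t : ℕ) :
    t ≤ ((Finset.range (2 ^ (k + 1) * t)).filter (· ∈ Rset k)).card := by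
  have hinj : Function.Injective fun j => 2 ^ k * (2 * j + 1) := fun a b hab => by
    have := Nat.eq_of_mul_eq_mul_left (by positivity) hab
    omega
  calc t = ((Finset.range t).image fun j => 2 ^ k * (2 * j + 1)).card := by
        rw [Finset.card_image_of_injective _ hinj, Finset.card_range]
    _ ≤ _ := Finset.card_le_card fun m hm => by
        obtain ⟨j, hj, rfl⟩ := Finset.mem_image.1 hm
        refine Finset.mem_filter.2 ⟨Finset.mem_range.2 ?_, two_pow_mul_odd_mem_rset k j⟩
        rw [pow_succ, mul_assoc]
        exact Nat.mul_lt_mul_of_pos_left (by simp at hj; omega) (by positivity)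

theorem frequently_le_partialDensity_rset (k : ℕ) :
    ∃ᶠ n in atTop, 1 / 2 ^ (k + 1) ≤ partialDensity (Rset k) n := by
  refine frequently_atTop.2 fun a => ⟨2 ^ (k + 1) * (a + 1) - 1, ?_, ?_⟩
  · have : a + 1 ≤ 2 ^ (k + 1) * (a + 1) := Nat.le_mul_of_pos_left _ (by positivity)
    omega
  · have hN : 2 ^ (k + 1) * (a + 1) - 1 + 1 = 2 ^ (k + 1) * (a + 1) :=
      Nat.sub_add_cancel (Nat.one_le_iff_ne_zero.2 (by positivity))
    rw [partialDensity, ← Nat.cast_add_one, hN, le_div_iff₀ (by positivity)]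
    have := card_filter_range_mem_rset k (a + 1)
    push_cast
    rw [one_div_mul_eq_div, mul_div_cancel_left₀ _ (by positivity)]
    exact_mod_cast this

theorem partialDensity_add_le_one {D S : Set ℕ} (h : Disjoint D S) (n : ℕ) :
    partialDensity D n + partialDensity S n ≤ 1 := by
  classical
  rw [partialDensity, partialDensity, ← add_div, div_le_one (by positivity)]
  have hsub :
      (Finset.range (n + 1)).filter (· ∈ S) ⊆ (Finset.range (n + 1)).filter (· ∉ D) :=
    Finset.monotone_filter_right _ fun _ _ hx => h.notMem_of_mem_right hx
  have := Finset.card_filter_add_card_filter_not (s := Finset.range (n + 1)) (· ∈ D)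
  have := Finset.card_le_card hsub
  simp only [Finset.card_range] at *
  exact_mod_cast (by omega : _ ≤ n + 1)

theorem HasDensity.inter_nonempty {D S : Set ℕ} (hD : HasDensity D 1) {c : ℝ} (hc : 0 < c)
    (hS : ∃ᶠ n in atTop, c ≤ partialDensity S n) : (D ∩ S).Nonempty := by
  by_contra hDS
  have hdisj : Disjoint D S :=
    Set.disjoint_iff_inter_eq_empty.2 (Set.not_nonempty_iff_eq_empty.1 hDS)
  have hlarge : ∀ᶠ n in atTop, 1 - c < partialDensity D n :=
    hD.eventually (lt_mem_nhds (by linarith))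
  obtain ⟨n, hSn, hDn⟩ := (hS.and_eventually hlarge).exists
  linarith [partialDensity_add_le_one hdisj n]

theorem HasDensity.inter_rset_nonempty {D : Set ℕ} (hD : HasDensity D 1) (k : ℕ) :
    (D ∩ Rset k).Nonempty :=
  hD.inter_nonempty (by positivity) (frequently_le_partialDensity_rset k)

theorem genericallyComputable_of_computable_charFun {A : Set ℕ}
    (hA : Computable (charFun A)) : GenericallyComputable A := by
  refine ⟨fun n => Part.some (charFun A n), hA.partrec,
    fun _ _ hm => Part.mem_some_iff.1 hm, ?_⟩
  refine tendsto_const_nhds.congr fun n => ?_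
  simp [partialDensity, div_self (Nat.cast_add_one_ne_zero (R := ℝ) n)]

theorem computableSet_of_genericallyComputable_rofSet {A : Set ℕ}
    (h : GenericallyComputable (RofSet A)) : ComputableSet A := by
  obtain ⟨Φ, hΦ, hcorrect, hdense⟩ := h
  have hval : Computable fun q : ℕ × ℕ => padicValNat 2 q.2 :=
    (computable_padicValNat (by norm_num)).comp Computable.snd
  obtain ⟨ψ, hψ, hψ_spec, hψ_dom⟩ := hΦ.exists_search
    (p := fun k m => !(m == 0) && padicValNat 2 m == k)
    (Primrec.and.to_comp.comp
      (Primrec.not.to_comp.comp (Primrec.beq.to_comp.comp Computable.snd (Computable.const 0)))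
      (Primrec.beq.to_comp.comp hval Computable.fst)).to₂
  have hψ_total : ∀ k, (ψ k).Dom := fun k => by
    obtain ⟨m, hm, hmk⟩ := hdense.inter_rset_nonempty k
    exact hψ_dom k m (by simpa using mem_rset_iff.1 hmk) hm
  refine computableSet_iff_computable_charFun.2 (hψ.of_eq_tot fun k => ?_)
  obtain ⟨m, hmk, hv⟩ := hψ_spec k _ (Part.get_mem (hψ_total k))
  simp only [Bool.and_eq_true, Bool.not_eq_true', beq_eq_false_iff_ne, beq_iff_eq] at hmk
  have : charFun A k = (ψ k).get (hψ_total k) := by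
    rw [hcorrect m _ hv, charFun_rofSet, if_neg hmk.1, hmk.2]
  exact this ▸ Part.get_mem _

theorem genericallyComputable_rofSet_iff (A : Set ℕ) :
    GenericallyComputable (RofSet A) ↔ ComputableSet A :=
  ⟨computableSet_of_genericallyComputable_rofSet, fun hA =>
    genericallyComputable_of_computable_charFun
      (computable_charFun_rofSet (computableSet_iff_computable_charFun.1 hA))⟩

/-- `R(A)` is Turing equivalent to `A`, and `R(A)` is generically
computable iff `A` is computable. -/
theorem stmt7 (A : Set ℕ) :
    SetTuringEquivalent (RofSet A) A ∧
      (GenericallyComputable (RofSet A) ↔ ComputableSet A) :=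
  ⟨setTuringEquivalent_rofSet A, genericallyComputable_rofSet_iff A⟩
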